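/- arXiv:2504.18387 — 6 statements merged into one kernel-verified Lean document; each statement's English description precedes it below -/
import Mathlib

section
/- Let X be a metric space, let φ : X × [0,∞) → X be continuous, let C : X → [0,∞] be lower semicontinuous, and let α > 0. Then the function (x,θ) ↦ ∫₀^θ e^{−αt}·C(φ(x,t)) dt (a Lebesgue integral with values in [0,∞]) is lower semicontinuous on X × [0,∞], where [0,∞] is the one-point compactification of [0,∞) and the value at θ = ∞ is ∫₀^∞ e^{−αt}·C(φ(x,t)) dt. -/
open MeasureTheory Filter Set
open scoped NNReal ENNReal Topology

/-!
For each time `t` the integrand is lower semicontinuous in `(x, θ)`: it is a product of the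
lower semicontinuous function `x ↦ C (φ (x, t))` with a nonnegative weight, cut off by the open
condition `t < θ`. Fatou's lemma along the (countably generated) neighbourhood filter then
passes lower semicontinuity through the integral.
-/

theorem LowerSemicontinuous.ite_zero {α γ : Type*} [TopologicalSpace α] [Preorder γ] [Zero γ]
    {p : α → Prop} [DecidablePred p] {f : α → γ} (hp : IsOpen {x | p x})
    (hf : LowerSemicontinuous f) (hf₀ : 0 ≤ f) :
    LowerSemicontinuous fun x => if p x then f x else 0 := by
  intro x y hy
  dsimp only at hy ⊢
  by_cases hx : p x
  · rw [if_pos hx] at hy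
    filter_upwards [hp.mem_nhds hx, hf x y hy] with z hpz hfz
    rwa [if_pos hpz]
  · rw [if_neg hx] at hy
    refine Eventually.of_forall fun z => ?_
    split_ifs
    exacts [hy.trans_le (hf₀ z), hy]

theorem LowerSemicontinuous.lintegral {X α : Type*} [TopologicalSpace X]
    [FirstCountableTopology X] [MeasurableSpace α] {μ : Measure α} {f : X → α → ℝ≥0∞}
    (hf : ∀ a, LowerSemicontinuous fun x => f x a) (hf_meas : ∀ x, AEMeasurable (f x) μ) :
    LowerSemicontinuous fun x => ∫⁻ a, f x a ∂μ := by
  refine lowerSemicontinuous_iff_le_liminf.2 fun x => ?_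
  calc ∫⁻ a, f x a ∂μ ≤ ∫⁻ a, liminf (fun y => f y a) (𝓝 x) ∂μ :=
        lintegral_mono fun a => (hf a).le_liminf x
    _ ≤ liminf (fun y => ∫⁻ a, f y a ∂μ) (𝓝 x) := lintegral_liminf_le' hf_meas

theorem stmt0_general {X : Type*} [MetricSpace X] (φ : X × ℝ≥0 → X) (hφ : Continuous φ)
    (C : X → ℝ≥0∞) (hC : LowerSemicontinuous C) (α : ℝ) :
    LowerSemicontinuous (fun p : X × ℝ≥0∞ =>
      ∫⁻ t in Set.Ioi (0 : ℝ),
        if ENNReal.ofReal t < p.2 then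
          ENNReal.ofReal (Real.exp (-α * t)) * C (φ (p.1, Real.toNNReal t))
        else 0) := by
  refine LowerSemicontinuous.lintegral (fun t => ?_) (fun p => ?_)
  · have hcost : LowerSemicontinuous fun p : X × ℝ≥0∞ => C (φ (p.1, Real.toNNReal t)) :=
      hC.comp (hφ.comp (continuous_fst.prodMk continuous_const))
    refine LowerSemicontinuous.ite_zero (isOpen_lt continuous_const continuous_snd) ?_
      fun _ => zero_le
    exact (ENNReal.continuous_const_mul ENNReal.ofReal_ne_top).comp_lowerSemicontinuous hcost
      fun _ _ hab => mul_le_mul_right hab _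
  · have hweight : Measurable fun t : ℝ => ENNReal.ofReal (Real.exp (-α * t)) := by fun_prop
    have hcost : Measurable fun t : ℝ => C (φ (p.1, Real.toNNReal t)) :=
      (hC.comp (hφ.comp (continuous_const.prodMk continuous_real_toNNReal))).measurable
    exact (Measurable.ite (measurableSet_lt ENNReal.measurable_ofReal measurable_const)
      (hweight.mul hcost) measurable_const).aemeasurable

/-- Let `X` be a metric space, `φ : X × [0,∞) → X` continuous,
`C : X → [0,∞]` lower semicontinuous and `α > 0`.  Then the function
`(x, θ) ↦ ∫₀^θ e^{-α t} C(φ(x,t)) dt` (a Lebesgue integral with values in `[0,∞]`),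
defined on `X × [0,∞]` where `[0,∞]` is the one-point compactification of `[0,∞)`
(realized as `ℝ≥0∞`, with the value at `θ = ∞` being `∫₀^∞ e^{-α t} C(φ(x,t)) dt`),
is lower semicontinuous. -/
theorem stmt0 {X : Type*} [MetricSpace X] (φ : X × ℝ≥0 → X) (hφ : Continuous φ)
    (C : X → ℝ≥0∞) (hC : LowerSemicontinuous C) (α : ℝ) (hα : 0 < α) :
    LowerSemicontinuous (fun p : X × ℝ≥0∞ =>
      ∫⁻ t in Set.Ioi (0 : ℝ),
        if ENNReal.ofReal t < p.2 then
          ENNReal.ofReal (Real.exp (-α * t)) * C (φ (p.1, Real.toNNReal t))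
        else 0) :=
  stmt0_general φ hφ C hC α
end

section
/- Let X and A be metric spaces, let φ : X × [0,∞) → X and l : X × A → X be continuous, let α > 0, let u : X → ℝ be bounded and continuous, and let c ∈ ℝ. Then the function F on X × [0,∞] × A defined by F(x,θ,a) := e^{−αθ}·u(l(φ(x,θ),a)) + (1 − e^{−αθ})·c for θ < ∞ and F(x,∞,a) := c is continuous, where [0,∞] is the one-point compactification of [0,∞). -/
open Filter Set Bornology
open scoped NNReal ENNReal Topology

/-!
Write `E(θ) = e^{-αθ}` for `θ < ∞` and `E(∞) = 0`. Then `F = E · (u ∘ l ∘ φ) + (1 - E) · c`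
everywhere, the value of the middle factor at `θ = ∞` being irrelevant. `E` is continuous on
`[0,∞]` because `α > 0`, and a continuous factor times a bounded factor is continuous at the
zeros of the continuous one, so only the points with `θ < ∞` need the continuity of `u`, `l`, `φ`.
-/

lemma ENNReal.tendsto_toReal_nhdsNE_top : Tendsto ENNReal.toReal (𝓝[≠] ∞) atTop := by
  refine tendsto_atTop.2 fun b => ?_
  filter_upwards [nhdsWithin_le_nhds (Ioi_mem_nhds ENNReal.ofReal_lt_top), self_mem_nhdsWithin]
    with θ hθ hθ_top
  exact (ENNReal.ofReal_le_iff_le_toReal hθ_top).1 (le_of_lt hθ)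

lemma continuous_mul_of_isBounded_of_continuousAt {Y R : Type*} [TopologicalSpace Y]
    [NonUnitalSeminormedRing R] {f g : Y → R} (hf : Continuous f) (hg : IsBounded (range g))
    (hfg : ∀ y, f y ≠ 0 → ContinuousAt g y) : Continuous fun y => f y * g y := by
  refine continuous_iff_continuousAt.2 fun y => ?_
  by_cases hy : f y = 0
  · obtain ⟨M, hM⟩ := hg.exists_norm_le
    have hf0 : Tendsto f (𝓝 y) (𝓝 0) := hy ▸ hf.continuousAt
    rw [ContinuousAt, hy, zero_mul]
    exact hf0.zero_mul_isBoundedUnder_le (isBoundedUnder_of ⟨M, fun z => hM _ (mem_range_self z)⟩)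
  · exact hf.continuousAt.mul (hfg y hy)

noncomputable def discount (α : ℝ) (θ : ℝ≥0∞) : ℝ :=
  if θ = ∞ then 0 else Real.exp (-α * θ.toReal)

lemma discount_top (α : ℝ) : discount α ∞ = 0 := if_pos rfl

lemma discount_of_ne_top {α : ℝ} {θ : ℝ≥0∞} (hθ : θ ≠ ∞) :
    discount α θ = Real.exp (-α * θ.toReal) := if_neg hθ

lemma continuous_discount {α : ℝ} (hα : 0 < α) : Continuous (discount α) := by
  refine continuous_iff_continuousAt.2 fun θ => ?_
  by_cases hθ : θ = ∞
  · subst hθ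
    have hexp : Tendsto (fun t => Real.exp (-α * t)) atTop (𝓝 0) := by
      simpa only [neg_mul, Function.comp_def, id] using
        Real.tendsto_exp_neg_atTop_nhds_zero.comp (tendsto_id.const_mul_atTop hα)
    rw [← continuousWithinAt_compl_self, ContinuousWithinAt, discount_top]
    exact (hexp.comp ENNReal.tendsto_toReal_nhdsNE_top).congr'
      (eventually_nhdsWithin_of_forall fun θ hθ => (discount_of_ne_top hθ).symm)
  · have hexp : ContinuousAt (fun θ : ℝ≥0∞ => Real.exp (-α * θ.toReal)) θ :=
      Real.continuous_exp.continuousAt.comp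
        (continuousAt_const.mul (ENNReal.continuousAt_toReal hθ))
    exact hexp.congr (eventually_ne_nhds hθ |>.mono fun θ hθ => (discount_of_ne_top hθ).symm)

/-- Let `X`, `A` be metric spaces, `φ : X × [0,∞) → X` and
`l : X × A → X` continuous, `α > 0`, `u : X → ℝ` bounded and continuous, `c ∈ ℝ`.
Then the function `F` on `X × [0,∞] × A` defined by
`F(x,θ,a) = e^{-αθ} u(l(φ(x,θ),a)) + (1 - e^{-αθ}) c` for `θ < ∞` and
`F(x,∞,a) = c` is continuous, where `[0,∞]` is the one-point compactification
of `[0,∞)` (realized as `ℝ≥0∞`). -/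
theorem stmt2 {X A : Type*} [MetricSpace X] [MetricSpace A]
    (φ : X × ℝ≥0 → X) (hφ : Continuous φ)
    (l : X × A → X) (hl : Continuous l) (α : ℝ) (hα : 0 < α)
    (u : X → ℝ) (hu : Continuous u) (hub : IsBounded (Set.range u)) (c : ℝ) :
    Continuous (fun p : X × ℝ≥0∞ × A =>
      if p.2.1 = ∞ then c
      else Real.exp (-α * (p.2.1).toReal) * u (l (φ (p.1, (p.2.1).toNNReal), p.2.2))
        + (1 - Real.exp (-α * (p.2.1).toReal)) * c) := by
  set g := fun p : X × ℝ≥0∞ × A => u (l (φ (p.1, (p.2.1).toNNReal), p.2.2))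
  have hE : Continuous fun p : X × ℝ≥0∞ × A => discount α p.2.1 :=
    (continuous_discount hα).comp (continuous_fst.comp continuous_snd)
  have hg : ∀ p : X × ℝ≥0∞ × A, discount α p.2.1 ≠ 0 → ContinuousAt g p := by
    rintro ⟨x, θ, a⟩ hθ_pos
    have hθ : θ ≠ ∞ := by rintro rfl; exact hθ_pos (discount_top α)
    have hθ' : ContinuousAt (fun p : X × ℝ≥0∞ × A => p.2.1.toNNReal) (x, θ, a) :=
      (ENNReal.tendsto_toNNReal hθ).comp (continuous_fst.comp continuous_snd).continuousAt
    exact hu.continuousAt.comp <| hl.continuousAt.comp <|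
      (hφ.continuousAt.comp (continuousAt_fst.prodMk hθ')).prodMk
        (continuous_snd.comp continuous_snd).continuousAt
  have hF : Continuous fun p => discount α p.2.1 * g p + (1 - discount α p.2.1) * c :=
    (continuous_mul_of_isBounded_of_continuousAt hE
      (hub.subset (range_comp_subset_range _ u)) hg).add
      ((continuous_const.sub hE).mul continuous_const)
  refine hF.congr fun p => ?_
  by_cases hθ : p.2.1 = ∞
  · simp [hθ, discount_top]
  · simp [g, hθ, discount_of_ne_top]
end

section
/- Let X and A be nonempty measurable spaces, let φ : X × [0,∞) → X and l : X × A → X be measurable, let α > 0, δ > 0, and x₀ ∈ X. Let μ be a measure on X × ([0,∞] × A) such that for every measurable set Γ ⊆ X one has μ(Γ × [0,∞] × A) = 𝟙_Γ(x₀) + ∫_{X × [0,∞) × A} e^{−αθ}·𝟙_Γ(l(φ(y,θ),a)) μ(d(y,θ,a)). If μ(X × [0,∞] × A) = ∞, then ∫_{X × [0,∞) × A} e^{−αθ} μ(d(y,θ,a)) = ∞; consequently, for every measurable function C : X × [0,∞] × A → [0,∞] satisfying C(x,θ,a) ≥ δ·e^{−αθ} for all (x,a) and all θ < ∞, one has ∫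 C dμ = ∞. -/
open MeasureTheory Filter Set
open scoped NNReal ENNReal

/-- Let `X`, `A` be nonempty measurable spaces, `φ : X × [0,∞) → X`,
`l : X × A → X` measurable, `α > 0`, `δ > 0`, `x₀ ∈ X`.  Let `μ` be a measure on
`X × ([0,∞] × A)` satisfying the occupation-measure characteristic equation:
for every measurable `Γ ⊆ X`,
`μ(Γ × [0,∞] × A) = 𝟙_Γ(x₀) + ∫ e^{-αθ} 𝟙_Γ(l(φ(y,θ),a)) dμ(y,θ,a)` (the integral
being over the part where `θ < ∞`).  If `μ` has infinite total mass, then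
`∫ e^{-αθ} dμ = ∞`; consequently, for every measurable `C : X × [0,∞] × A → [0,∞]`
with `C(x,θ,a) ≥ δ e^{-αθ}` whenever `θ < ∞`, one has `∫ C dμ = ∞`. -/
theorem stmt3 {X A : Type*} [MeasurableSpace X] [MeasurableSpace A]
    [Nonempty X] [Nonempty A]
    (φ : X × ℝ≥0 → X) (hφ : Measurable φ)
    (l : X × A → X) (hl : Measurable l)
    (α δ : ℝ) (hα : 0 < α) (hδ : 0 < δ) (x₀ : X)
    (μ : Measure (X × ℝ≥0∞ × A))
    (hchar : ∀ Γ : Set X, MeasurableSet Γ →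
      μ {p : X × ℝ≥0∞ × A | p.1 ∈ Γ} =
        Set.indicator Γ (fun _ => (1 : ℝ≥0∞)) x₀ +
        ∫⁻ p : X × ℝ≥0∞ × A,
          (if p.2.1 ≠ ∞ then
            ENNReal.ofReal (Real.exp (-α * (p.2.1).toReal)) *
              Set.indicator Γ (fun _ => (1 : ℝ≥0∞))
                (l (φ (p.1, (p.2.1).toNNReal), p.2.2))
          else 0) ∂μ)
    (hinf : μ Set.univ = ∞) :
    (∫⁻ p : X × ℝ≥0∞ × A,
        (if p.2.1 ≠ ∞ then ENNReal.ofReal (Real.exp (-α * (p.2.1).toReal)) else 0) ∂μ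
      = ∞) ∧
    ∀ C : X × ℝ≥0∞ × A → ℝ≥0∞, Measurable C →
      (∀ (x : X) (a : A) (θ : ℝ≥0∞), θ ≠ ∞ →
        ENNReal.ofReal (δ * Real.exp (-α * θ.toReal)) ≤ C (x, θ, a)) →
      ∫⁻ p, C p ∂μ = ∞ := by
  have h := hchar Set.univ MeasurableSet.univ
  simp only [Set.mem_univ, Set.setOf_true, Set.indicator_univ, mul_one] at h
  have hI : (∫⁻ p : X × ℝ≥0∞ × A,
      (if p.2.1 ≠ ∞ then ENNReal.ofReal (Real.exp (-α * (p.2.1).toReal)) else 0) ∂μ) = ∞ := by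
    by_contra hI
    rw [hinf] at h
    exact (ENNReal.add_ne_top.mpr ⟨ENNReal.one_ne_top, hI⟩) h.symm
  refine ⟨hI, ?_⟩
  intro C hC hCge
  have hmono : (∫⁻ p : X × ℝ≥0∞ × A,
      ENNReal.ofReal δ * (if p.2.1 ≠ ∞ then ENNReal.ofReal (Real.exp (-α * (p.2.1).toReal)) else 0) ∂μ)
      ≤ ∫⁻ p, C p ∂μ := by
    refine lintegral_mono fun p => ?_
    by_cases hp : p.2.1 ≠ ∞
    · rw [if_pos hp, ← ENNReal.ofReal_mul hδ.le]
      exact hCge p.1 p.2.2 p.2.1 hp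
    · simp [hp]
  have hmeas : Measurable (fun p : X × ℝ≥0∞ × A =>
      if p.2.1 ≠ ∞ then ENNReal.ofReal (Real.exp (-α * (p.2.1).toReal)) else 0) := by
    apply Measurable.ite
    · exact (measurable_fst.comp measurable_snd) (measurableSet_singleton ∞).compl
    · exact (Real.measurable_exp.comp ((ENNReal.measurable_toReal.comp
        (measurable_fst.comp measurable_snd)).const_mul (-α))).ennreal_ofReal
    · exact measurable_const
  rw [lintegral_const_mul _ hmeas, hI, ENNReal.mul_top (by simpa using hδ)] at hmono
  exact top_le_iff.mp hmono
end

section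
/- Let α, g, h, K be positive real constants, and let x_g denote the unique solution in (0,∞) of (g·h/α)·(1 − e^{−αx}) = g·h·x − K·α. For θ ∈ [0,∞) and w ∈ ℝ define G_w(θ) := K·e^{−αθ} + g·h·(1/α² − e^{−αθ}/α² − (θ/α)·e^{−αθ}) + e^{−αθ}·w, and G_w(∞) := g·h/α². Then there is exactly one w ∈ [0,∞) satisfying the fixed-point equation w = inf_{θ∈[0,∞]} G_w(θ), namely w* := g·h·x_g/α − K, and moreover w* = K·(1 − e^{−α x_g})/(α·x_g − 1 + e^{−α x_g}) and w* > 0. -/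
open Filter
open scoped NNReal ENNReal Topology

/-- The function `G_w` on `[0,∞)`:
`G_w(θ) = K e^{-αθ} + g h (1/α² - e^{-αθ}/α² - (θ/α) e^{-αθ}) + e^{-αθ} w`. -/
noncomputable def Gfin (α g h K w θ : ℝ) : ℝ :=
  K * Real.exp (-α * θ) +
    g * h * (1 / α ^ 2 - Real.exp (-α * θ) / α ^ 2 - (θ / α) * Real.exp (-α * θ)) +
    Real.exp (-α * θ) * w

/-- The extension of `G_w` to `[0,∞]` (realized as `ℝ≥0∞`), with
`G_w(∞) := g·h/α²`. -/
noncomputable def Gext (α g h K w : ℝ) (θ : ℝ≥0∞) : ℝ :=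
  if θ = ∞ then g * h / α ^ 2 else Gfin α g h K w θ.toReal

/-
Writing `c = gh/α²` and `θ_w = α(K + w)/(gh)`, one has
`G_w(θ) = c (1 - e^{-αθ} (αθ - αθ_w + 1))`, and `e^{-t}(t - a + 1) ≤ e^{-a}` (a form of
`1 + x ≤ eˣ`) shows that the infimum over `[0,∞]` is attained at `θ_w` and equals
`φ(w) = c (1 - e^{-αθ_w})`. Since `e^{-a} - e^{-b} < b - a` for `0 ≤ a < b`, the map `φ`
satisfies `φ(w₂) - φ(w₁) < w₂ - w₁`, so it has at most one fixed point in `[-K, ∞)`.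
The defining equation of `x_g` says precisely that `θ_{w*} = x_g` and `φ(w*) = w*`.
-/

namespace FluidQueue

theorem exp_neg_mul_sub_add_one_le (t a : ℝ) :
    Real.exp (-t) * (t - a + 1) ≤ Real.exp (-a) :=
  calc Real.exp (-t) * (t - a + 1)
      ≤ Real.exp (-t) * Real.exp (t - a) := by
        gcongr; exact Real.add_one_le_exp _
    _ = Real.exp (-a) := by rw [← Real.exp_add]; ring_nf

theorem exp_neg_sub_exp_neg_lt {a b : ℝ} (ha : 0 ≤ a) (hab : a < b) :
    Real.exp (-a) - Real.exp (-b) < b - a :=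
  calc Real.exp (-a) - Real.exp (-b)
      = Real.exp (-a) * (1 - Real.exp (-(b - a))) := by
        rw [mul_sub, ← Real.exp_add]; ring_nf
    _ < Real.exp (-a) * (b - a) := by
        refine mul_lt_mul_of_pos_left ?_ (Real.exp_pos _)
        linarith [Real.add_one_lt_exp (show -(b - a) ≠ 0 by linarith)]
    _ ≤ b - a := by
        apply mul_le_of_le_one_left (by linarith)
        exact Real.exp_le_one_iff.mpr (by linarith)

variable {α g h K : ℝ}

noncomputable def critPoint (α g h K w : ℝ) : ℝ := α * (K + w) / (g * h)

noncomputable def Ginf (α g h K w : ℝ) : ℝ :=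
  g * h / α ^ 2 * (1 - Real.exp (-(α * critPoint α g h K w)))

theorem Gfin_eq (hα : α ≠ 0) (hg : g ≠ 0) (hh : h ≠ 0) (w θ : ℝ) :
    Gfin α g h K w θ = g * h / α ^ 2 *
      (1 - Real.exp (-(α * θ)) * (α * θ - α * critPoint α g h K w + 1)) := by
  unfold Gfin critPoint
  rw [neg_mul]
  field_simp
  ring

theorem Gfin_critPoint (hα : α ≠ 0) (hg : g ≠ 0) (hh : h ≠ 0) (w : ℝ) :
    Gfin α g h K w (critPoint α g h K w) = Ginf α g h K w := by
  rw [Gfin_eq hα hg hh, Ginf]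
  ring_nf

theorem Ginf_le_Gfin (hα : 0 < α) (hg : 0 < g) (hh : 0 < h) (w θ : ℝ) :
    Ginf α g h K w ≤ Gfin α g h K w θ := by
  rw [Gfin_eq hα.ne' hg.ne' hh.ne', Ginf]
  refine mul_le_mul_of_nonneg_left ?_ (by positivity)
  linarith [exp_neg_mul_sub_add_one_le (α * θ) (α * critPoint α g h K w)]

theorem isGLB_range_Gext (hα : 0 < α) (hg : 0 < g) (hh : 0 < h) {w : ℝ} (hw : 0 ≤ K + w) :
    IsGLB (Set.range (Gext α g h K w)) (Ginf α g h K w) := by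
  refine ⟨?_, fun b hb => ?_⟩
  · rintro _ ⟨θ, rfl⟩
    unfold Gext
    split_ifs
    · exact mul_le_of_le_one_right (by positivity)
        (by linarith [Real.exp_pos (-(α * critPoint α g h K w))])
    · exact Ginf_le_Gfin hα hg hh w _
  · have hcrit : 0 ≤ critPoint α g h K w := by unfold critPoint; positivity
    have hval : Gext α g h K w (ENNReal.ofReal (critPoint α g h K w)) = Ginf α g h K w := by
      rw [Gext, if_neg ENNReal.ofReal_ne_top, ENNReal.toReal_ofReal hcrit,
        Gfin_critPoint hα.ne' hg.ne' hh.ne']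
    exact hval ▸ hb (Set.mem_range_self _)

theorem Ginf_sub_Ginf_lt (hα : 0 < α) (hg : 0 < g) (hh : 0 < h) {w₁ w₂ : ℝ} (hw₁ : 0 ≤ K + w₁)
    (hlt : w₁ < w₂) : Ginf α g h K w₂ - Ginf α g h K w₁ < w₂ - w₁ := by
  set a := α * critPoint α g h K w₁
  set b := α * critPoint α g h K w₂
  have ha : 0 ≤ a := by unfold a critPoint; positivity
  have hab : a < b := by unfold a b critPoint; gcongr
  have hscale : g * h / α ^ 2 * (b - a) = w₂ - w₁ := by
    unfold a b critPoint; field_simp; ring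
  calc Ginf α g h K w₂ - Ginf α g h K w₁
      = g * h / α ^ 2 * (Real.exp (-a) - Real.exp (-b)) := by unfold Ginf; ring
    _ < g * h / α ^ 2 * (b - a) :=
        mul_lt_mul_of_pos_left (exp_neg_sub_exp_neg_lt ha hab) (by positivity)
    _ = w₂ - w₁ := hscale

theorem eq_of_Ginf_eq_self (hα : 0 < α) (hg : 0 < g) (hh : 0 < h) {w₁ w₂ : ℝ}
    (hw₁ : 0 ≤ K + w₁) (hw₂ : 0 ≤ K + w₂)
    (hfix₁ : Ginf α g h K w₁ = w₁) (hfix₂ : Ginf α g h K w₂ = w₂) : w₁ = w₂ := by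
  by_contra hne
  rcases lt_or_gt_of_ne hne with hlt | hlt
  · linarith [Ginf_sub_Ginf_lt hα hg hh hw₁ hlt]
  · linarith [Ginf_sub_Ginf_lt hα hg hh hw₂ hlt]

end FluidQueue

open FluidQueue in
/-- Let `α, g, h, K > 0` and let `x_g` be the unique solution in
`(0,∞)` of `(gh/α)(1 - e^{-αx}) = ghx - Kα`.  Then there is exactly one `w ∈ [0,∞)`
satisfying the fixed-point equation `w = inf_{θ ∈ [0,∞]} G_w(θ)`, namely
`w* = g·h·x_g/α - K`; moreover `w* = K(1 - e^{-αx_g})/(αx_g - 1 + e^{-αx_g})` and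
`w* > 0`. -/
theorem stmt12 (α g h K xg : ℝ) (hα : 0 < α) (hg : 0 < g) (hh : 0 < h) (hK : 0 < K)
    (hxg : 0 < xg)
    (hxgeq : g * h / α * (1 - Real.exp (-α * xg)) = g * h * xg - K * α) :
    (∀ w : ℝ, (0 ≤ w ∧ IsGLB (Set.range (Gext α g h K w)) w) ↔
      w = g * h * xg / α - K) ∧
    g * h * xg / α - K
      = K * (1 - Real.exp (-α * xg)) / (α * xg - 1 + Real.exp (-α * xg)) ∧
    0 < g * h * xg / α - K := by
  have hgh : 0 < g * h := mul_pos hg hh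
  set w := g * h * xg / α - K
  set E := Real.exp (-α * xg)
  have hE : E < 1 := Real.exp_lt_one_iff.mpr (by nlinarith)
  have hw_eq : w = g * h / α ^ 2 * (1 - E) := by
    unfold w; field_simp; field_simp at hxgeq; linear_combination -hxgeq
  have hfix : Ginf α g h K w = w := by
    have hcrit : critPoint α g h K w = xg := by unfold critPoint w; field_simp; ring
    rw [Ginf, hcrit, ← neg_mul, hw_eq]
  have hw_pos : 0 < w := by rw [hw_eq]; exact mul_pos (by positivity) (by linarith)
  have hD : K * α ^ 2 = g * h * (α * xg - 1 + E) := by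
    field_simp at hxgeq; linear_combination hxgeq
  have hD_pos : 0 < α * xg - 1 + E :=
    pos_of_mul_pos_right (hD ▸ by positivity) hgh.le
  refine ⟨fun v => ⟨fun ⟨hv, hglb⟩ => ?_, ?_⟩, ?_, hw_pos⟩
  · have hvfix := (isGLB_range_Gext hα hg hh (by linarith : 0 ≤ K + v)).unique hglb
    exact eq_of_Ginf_eq_self hα hg hh (by linarith) (by linarith) hvfix hfix
  · rintro rfl
    have hglb := isGLB_range_Gext hα hg hh (show 0 ≤ K + w by linarith)
    rw [hfix] at hglb
    exact ⟨hw_pos.le, hglb⟩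
  · rw [eq_div_iff hD_pos.ne', hw_eq]
    field_simp
    linear_combination (E - 1) * hD
end

section
/- Let α, g, h, K be positive real constants, let x_g be the unique solution in (0,∞) of (g·h/α)·(1 − e^{−αx}) = g·h·x − K·α, and set w* := g·h·x_g/α − K. For θ ∈ [0,∞), x ∈ [0,∞) and w ∈ ℝ define B(θ,x,w) := K·e^{−αθ} + (g·h·x/α)·(1 − e^{−αθ}) + g·h·(1/α² − e^{−αθ}/α² − (θ/α)·e^{−αθ}) + e^{−αθ}·w, and B(∞,x,w) := g·h·x/α + g·h/α². Define W : [0,∞) → ℝ by W(x) := B(x_g − x, x, w*) for 0 ≤ x ≤ x_g and W(x) := K + w* for x > x_g. Then W(0) = w*, and for every x ∈ [0,∞): W(x) = inf_{θ ∈ [0,∞]} B(θ, x, w*), and this infimum is attained at θ = max{x_g − x, 0} and at no other θ ∈ [0,∞]. -/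
open Filter
open scoped NNReal ENNReal Topology

/-- The Bellman increment `B(θ, x, w)` for finite `θ ∈ [0,∞)`:
`B(θ,x,w) = K e^{-αθ} + (ghx/α)(1 - e^{-αθ}) + gh(1/α² - e^{-αθ}/α² - (θ/α)e^{-αθ})
+ e^{-αθ} w`. -/
noncomputable def Bfin (α g h K θ x w : ℝ) : ℝ :=
  K * Real.exp (-α * θ) +
    g * h * x / α * (1 - Real.exp (-α * θ)) +
    g * h * (1 / α ^ 2 - Real.exp (-α * θ) / α ^ 2 - (θ / α) * Real.exp (-α * θ)) +
    Real.exp (-α * θ) * w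

/-- The extension of `B(·, x, w)` to `[0,∞]` (realized as `ℝ≥0∞`), with
`B(∞,x,w) := ghx/α + gh/α²`. -/
noncomputable def Bext (α g h K : ℝ) (θ : ℝ≥0∞) (x w : ℝ) : ℝ :=
  if θ = ∞ then g * h * x / α + g * h / α ^ 2 else Bfin α g h K θ.toReal x w

/-- The Bellman function `W` of the fluid-queue example:
`W(x) = B(x_g - x, x, w*)` for `0 ≤ x ≤ x_g`, and `W(x) = K + w*` for `x > x_g`,
where `w* = g·h·x_g/α - K`. -/
noncomputable def Wfun (α g h K xg x : ℝ) : ℝ :=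
  if x ≤ xg then Bfin α g h K (xg - x) x (g * h * xg / α - K)
  else K + (g * h * xg / α - K)

/-
Write `m = x_g - x`. With `w = w*` the `K`-terms of `B(θ, x, w*)` cancel, leaving
`B(θ, x, w*) = B(∞, x, w*) - (gh/α) ψ(θ)` with `ψ(t) = e^{-αt} (1/α - m + t)`, and `W(x)` is
this expression at `θ = max m 0`. Since `ψ'(t) = α e^{-αt} (m - t)`, `ψ` increases up to `m`
and decreases afterwards, so on `[0,∞)` it has a strict maximum at `max m 0`, where it is
positive, whereas `θ = ∞` corresponds to `ψ = 0`.
-/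

noncomputable def psi (α m t : ℝ) : ℝ := Real.exp (-α * t) * (1 / α - m + t)

section Psi

variable {α : ℝ} (m : ℝ)

lemma hasDerivAt_psi (hα : α ≠ 0) (t : ℝ) :
    HasDerivAt (psi α m) (Real.exp (-α * t) * (α * (m - t))) t := by
  have hexp : HasDerivAt (fun t : ℝ => Real.exp (-α * t)) (Real.exp (-α * t) * -α) t := by
    simpa using ((hasDerivAt_id t).const_mul (-α)).exp
  have hlin : HasDerivAt (fun t : ℝ => 1 / α - m + t) 1 t := (hasDerivAt_id' t).const_add _
  refine (hexp.mul hlin).congr_deriv ?_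
  field_simp
  ring

lemma psi_lt_psi_max (hα : 0 < α) {t : ℝ} (ht : 0 ≤ t) (hne : t ≠ max m 0) :
    psi α m t < psi α m (max m 0) := by
  have hcont : Continuous (psi α m) := by unfold psi; fun_prop
  have hderiv (u : ℝ) : deriv (psi α m) u = Real.exp (-α * u) * (α * (m - u)) :=
    (hasDerivAt_psi m hα.ne' u).deriv
  rcases hne.lt_or_gt with hlt | hgt
  · have hmono : StrictMonoOn (psi α m) (Set.Icc 0 (max m 0)) := by
      refine strictMonoOn_of_deriv_pos (convex_Icc _ _) hcont.continuousOn fun u hu => ?_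
      rw [interior_Icc] at hu
      have hum : u < m := (lt_max_iff.mp hu.2).resolve_right hu.1.not_gt
      rw [hderiv]
      have : 0 < m - u := sub_pos.mpr hum
      positivity
    exact hmono ⟨ht, hlt.le⟩ ⟨ht.trans hlt.le, le_rfl⟩ hlt
  · have hanti : StrictAntiOn (psi α m) (Set.Ici (max m 0)) := by
      refine strictAntiOn_of_deriv_neg (convex_Ici _) hcont.continuousOn fun u hu => ?_
      rw [interior_Ici] at hu
      have hmu : m < u := (max_lt_iff.mp hu).1
      rw [hderiv]
      exact mul_neg_of_pos_of_neg (Real.exp_pos _) (mul_neg_of_pos_of_neg hα (by linarith))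
    exact hanti Set.self_mem_Ici (Set.mem_Ici.mpr hgt.le) hgt

lemma psi_max_pos (hα : 0 < α) : 0 < psi α m (max m 0) := by
  have : 0 < 1 / α - m + max m 0 := by
    have := le_max_left m 0
    have : 0 < 1 / α := by positivity
    linarith
  unfold psi
  positivity

end Psi

section Bellman

variable {α : ℝ} (g h K xg x : ℝ)

lemma Bfin_eq_sub_psi (hα : α ≠ 0) (θ : ℝ) :
    Bfin α g h K θ x (g * h * xg / α - K)
      = (g * h * x / α + g * h / α ^ 2) - g * h / α * psi α (xg - x) θ := by
  unfold Bfin psi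
  field_simp
  ring

lemma Bext_eq_sub_psi (hα : α ≠ 0) {θ : ℝ≥0∞} (hθ : θ ≠ ∞) :
    Bext α g h K θ x (g * h * xg / α - K)
      = (g * h * x / α + g * h / α ^ 2) - g * h / α * psi α (xg - x) θ.toReal := by
  rw [Bext, if_neg hθ, Bfin_eq_sub_psi g h K xg x hα]

lemma Wfun_eq_sub_psi (hα : α ≠ 0) :
    Wfun α g h K xg x
      = (g * h * x / α + g * h / α ^ 2) - g * h / α * psi α (xg - x) (max (xg - x) 0) := by
  unfold Wfun
  split_ifs with hx
  · rw [Bfin_eq_sub_psi g h K xg x hα, max_eq_left (by linarith)]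
  · rw [max_eq_right (by linarith), psi, mul_zero, Real.exp_zero]
    field_simp
    ring

lemma Wfun_zero (hα : α ≠ 0) (hxg : 0 ≤ xg)
    (hxgeq : g * h / α * (1 - Real.exp (-α * xg)) = g * h * xg - K * α) :
    Wfun α g h K xg 0 = g * h * xg / α - K := by
  rw [Wfun, if_pos hxg, sub_zero, Bfin]
  field_simp
  field_simp at hxgeq
  linear_combination hxgeq

end Bellman

theorem stmt13_general (α g h K xg : ℝ) (hα : 0 < α) (hg : 0 < g) (hh : 0 < h)
    (hxg : 0 < xg)
    (hxgeq : g * h / α * (1 - Real.exp (-α * xg)) = g * h * xg - K * α) :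
    Wfun α g h K xg 0 = g * h * xg / α - K ∧
    ∀ x : ℝ, 0 ≤ x →
      Wfun α g h K xg x
        = Bext α g h K (ENNReal.ofReal (max (xg - x) 0)) x (g * h * xg / α - K) ∧
      ∀ θ : ℝ≥0∞, θ ≠ ENNReal.ofReal (max (xg - x) 0) →
        Wfun α g h K xg x < Bext α g h K θ x (g * h * xg / α - K) := by
  refine ⟨Wfun_zero g h K xg hα.ne' hxg.le hxgeq, fun x _ => ⟨?_, fun θ hθ => ?_⟩⟩
  · rw [Wfun_eq_sub_psi g h K xg x hα.ne', Bext_eq_sub_psi g h K xg x hα.ne' ENNReal.ofReal_ne_top,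
      ENNReal.toReal_ofReal (le_max_right _ _)]
  have hc : 0 < g * h / α := by positivity
  rw [Wfun_eq_sub_psi g h K xg x hα.ne']
  by_cases hθtop : θ = ∞
  · rw [hθtop, Bext, if_pos rfl, sub_lt_self_iff]
    exact mul_pos hc (psi_max_pos _ hα)
  · rw [Bext_eq_sub_psi g h K xg x hα.ne' hθtop, sub_lt_sub_iff_left]
    have hne : θ.toReal ≠ max (xg - x) 0 := fun h =>
      hθ (by rw [← h, ENNReal.ofReal_toReal hθtop])
    exact mul_lt_mul_of_pos_left (psi_lt_psi_max _ hα ENNReal.toReal_nonneg hne) hc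

/-- Let `α, g, h, K > 0`, let `x_g` be the unique solution in
`(0,∞)` of `(gh/α)(1 - e^{-αx}) = ghx - Kα`, and set `w* = g·h·x_g/α - K`.  Then
`W(0) = w*`, and for every `x ≥ 0`, `W(x) = inf_{θ ∈ [0,∞]} B(θ, x, w*)`, the
infimum being attained exactly at `θ = max{x_g - x, 0}`. -/
theorem stmt13 (α g h K xg : ℝ) (hα : 0 < α) (hg : 0 < g) (hh : 0 < h) (hK : 0 < K)
    (hxg : 0 < xg)
    (hxgeq : g * h / α * (1 - Real.exp (-α * xg)) = g * h * xg - K * α) :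
    Wfun α g h K xg 0 = g * h * xg / α - K ∧
    ∀ x : ℝ, 0 ≤ x →
      Wfun α g h K xg x
        = Bext α g h K (ENNReal.ofReal (max (xg - x) 0)) x (g * h * xg / α - K) ∧
      ∀ θ : ℝ≥0∞, θ ≠ ENNReal.ofReal (max (xg - x) 0) →
        Wfun α g h K xg x < Bext α g h K θ x (g * h * xg / α - K) :=
  stmt13_general α g h K xg hα hg hh hxg hxgeq
end

section
/- Let α, h, d, K be positive real constants with d ≥ h/α². Then the function H(x) := ( K·(1 − e^{−αx}) − K·α²·d/h ) / (α·x − 1 + e^{−αx}) is strictly increasing on (0,∞), H(x) → −∞ as x → 0⁺, and H(x) → 0 as x → ∞; consequently sup_{x>0} H(x) = 0 and the supremum is not attained. -/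
open Filter
open scoped Topology

/-!
Substituting `t = αx` and writing `C = Kα²d/h`, the hypothesis `d ≥ h/α²` says `C ≥ K`, and
`H(x) = (K(1 - e^{-t}) - C) / (t - 1 + e^{-t})`. By the quotient rule the numerator of the
derivative in `t` simplifies to `K t e^{-t} + (C - K)(1 - e^{-t}) > 0`, so `H` is strictly
increasing. As `t → 0⁺` the numerator tends to `-C < 0` while the denominator tends to `0⁺`;
as `t → ∞` the numerator stays bounded while the denominator grows linearly. A strictly
increasing function tending to `0` at infinity has supremum `0`, never attained.
-/

/-- The dual functional of the fluid-queue example expressed through the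
threshold: `H(x) = (K(1 - e^{-αx}) - Kα²d/h) / (αx - 1 + e^{-αx})`. -/
noncomputable def Hfun (α h d K x : ℝ) : ℝ :=
  (K * (1 - Real.exp (-α * x)) - K * α ^ 2 * d / h) /
    (α * x - 1 + Real.exp (-α * x))

open Real Set

noncomputable def dualRatio (K C t : ℝ) : ℝ :=
  (K * (1 - exp (-t)) - C) / (t - 1 + exp (-t))

lemma Hfun_eq_dualRatio_comp (α h d K : ℝ) :
    Hfun α h d K = dualRatio K (K * α ^ 2 * d / h) ∘ (α * ·) := by
  ext x
  simp only [Hfun, dualRatio, Function.comp_apply, neg_mul]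

lemma sub_one_add_exp_neg_pos {t : ℝ} (ht : t ≠ 0) : 0 < t - 1 + exp (-t) := by
  linarith [add_one_lt_exp (neg_ne_zero.mpr ht)]

lemma hasDerivAt_dualRatio (K C : ℝ) {t : ℝ} (ht : t ≠ 0) :
    HasDerivAt (dualRatio K C)
      ((K * t * exp (-t) + (C - K) * (1 - exp (-t))) / (t - 1 + exp (-t)) ^ 2) t := by
  have hexp : HasDerivAt (fun s => exp (-s)) (-exp (-t)) t := by
    simpa using (hasDerivAt_neg t).exp
  have hnum := ((hexp.const_sub 1).const_mul K).sub_const C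
  have hden := ((hasDerivAt_id' t).sub_const 1).add hexp
  refine (hnum.div hden (sub_one_add_exp_neg_pos ht).ne').congr_deriv ?_
  simp only [Pi.add_apply]
  ring

lemma strictMonoOn_dualRatio {K C : ℝ} (hK : 0 < K) (hKC : K ≤ C) :
    StrictMonoOn (dualRatio K C) (Ioi 0) := by
  have hderiv (t : ℝ) (ht : t ∈ Ioi 0) := hasDerivAt_dualRatio K C (ne_of_gt ht)
  refine strictMonoOn_of_hasDerivWithinAt_pos (convex_Ioi 0)
    (fun t ht => (hderiv t ht).continuousAt.continuousWithinAt)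
    (fun t ht => (hderiv t (interior_subset ht)).hasDerivWithinAt) fun t ht => ?_
  rw [interior_Ioi, mem_Ioi] at ht
  have hexp_lt_one : exp (-t) < 1 := exp_lt_one_iff.mpr (neg_neg_of_pos ht)
  have hlead : 0 < K * t * exp (-t) := by positivity
  have hrest : 0 ≤ (C - K) * (1 - exp (-t)) :=
    mul_nonneg (sub_nonneg.mpr hKC) (sub_nonneg.mpr hexp_lt_one.le)
  exact div_pos (by linarith) (pow_pos (sub_one_add_exp_neg_pos (ne_of_gt ht)) 2)

lemma tendsto_dualRatio_nhdsGT_zero (K : ℝ) {C : ℝ} (hC : 0 < C) :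
    Tendsto (dualRatio K C) (𝓝[>] 0) atBot := by
  have hnum : Tendsto (fun t => K * (1 - exp (-t)) - C) (𝓝[>] 0) (𝓝 (-C)) := by
    have : Continuous (fun t => K * (1 - exp (-t)) - C) := by fun_prop
    simpa using (this.tendsto 0).mono_left nhdsWithin_le_nhds
  have hden : Tendsto (fun t => t - 1 + exp (-t)) (𝓝[>] 0) (𝓝[>] 0) := by
    refine tendsto_nhdsWithin_of_tendsto_nhds_of_eventually_within _ ?_ ?_
    · have : Continuous (fun t : ℝ => t - 1 + exp (-t)) := by fun_prop
      simpa using (this.tendsto 0).mono_left nhdsWithin_le_nhds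
    · filter_upwards [self_mem_nhdsWithin] with t ht
      exact sub_one_add_exp_neg_pos (ne_of_gt ht)
  exact (hnum.neg_mul_atTop (neg_neg_of_pos hC) (tendsto_inv_nhdsGT_zero.comp hden)).congr
    fun t => (div_eq_mul_inv _ _).symm

lemma tendsto_dualRatio_atTop (K C : ℝ) : Tendsto (dualRatio K C) atTop (𝓝 0) := by
  have hexp : Tendsto (fun t => exp (-t)) atTop (𝓝 0) :=
    tendsto_exp_atBot.comp tendsto_neg_atTop_atBot
  have hnum := ((hexp.const_sub 1).const_mul K).sub_const C
  have hden : Tendsto (fun t => t - 1 + exp (-t)) atTop atTop :=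
    ((tendsto_atTop_add_const_right _ (-1) tendsto_id).atTop_add_nonneg
      fun t => (exp_pos _).le).congr fun t => by simp only [id]; ring
  exact hnum.div_atTop hden

lemma StrictMonoOn.isLUB_image_Ioi_and_notMem {α β : Type*} [LinearOrder α] [NoMaxOrder α]
    [LinearOrder β] [TopologicalSpace β] [OrderClosedTopology β] {f : α → β} {a : α} {L : β}
    (hf : StrictMonoOn f (Ioi a)) (hL : Tendsto f atTop (𝓝 L)) :
    IsLUB (f '' Ioi a) L ∧ L ∉ f '' Ioi a := by
  have : Nonempty α := ⟨a⟩
  have hle (x : α) (hx : x ∈ Ioi a) : f x ≤ L :=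
    ge_of_tendsto hL <| (eventually_ge_atTop x).mono fun y hy =>
      hf.monotoneOn hx (lt_of_lt_of_le hx hy) hy
  have hlt (x : α) (hx : x ∈ Ioi a) : f x < L := by
    obtain ⟨y, hxy⟩ := exists_gt x
    have hy : y ∈ Ioi a := lt_trans hx hxy
    exact (hf hx hy hxy).trans_le (hle y hy)
  refine ⟨⟨?_, fun b hb => le_of_tendsto hL ?_⟩, ?_⟩
  · rintro _ ⟨x, hx, rfl⟩
    exact hle x hx
  · filter_upwards [eventually_gt_atTop a] with x hx
    exact hb ⟨x, hx, rfl⟩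
  · rintro ⟨x, hx, hfx⟩
    exact (hlt x hx).ne hfx

theorem stmt16_general (α h d K : ℝ) (hα : 0 < α) (hh : 0 < h) (hK : 0 < K)
    (hdh : h / α ^ 2 ≤ d) :
    StrictMonoOn (Hfun α h d K) (Set.Ioi 0) ∧
    Tendsto (Hfun α h d K) (𝓝[>] 0) atBot ∧
    Tendsto (Hfun α h d K) atTop (𝓝 0) ∧
    IsLUB (Hfun α h d K '' Set.Ioi 0) 0 ∧
    (0 : ℝ) ∉ Hfun α h d K '' Set.Ioi 0 := by
  set C := K * α ^ 2 * d / h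
  have hKC : K ≤ C := by
    rw [le_div_iff₀ hh]
    nlinarith [(div_le_iff₀ (by positivity : (0 : ℝ) < α ^ 2)).mp hdh]
  have hscale : Tendsto (α * ·) (𝓝[>] 0) (𝓝[>] 0) := by
    refine tendsto_nhdsWithin_of_tendsto_nhds_of_eventually_within _ ?_ ?_
    · simpa using ((continuous_const_mul α).tendsto 0).mono_left nhdsWithin_le_nhds
    · filter_upwards [self_mem_nhdsWithin] with x hx
      exact mul_pos hα hx
  have hmono : StrictMonoOn (Hfun α h d K) (Ioi 0) := by
    rw [Hfun_eq_dualRatio_comp]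
    exact (strictMonoOn_dualRatio hK hKC).comp ((strictMono_mul_left_of_pos hα).strictMonoOn _)
      fun x hx => mul_pos hα hx
  have htop : Tendsto (Hfun α h d K) atTop (𝓝 0) := by
    rw [Hfun_eq_dualRatio_comp]
    exact (tendsto_dualRatio_atTop K C).comp (tendsto_id.const_mul_atTop hα)
  refine ⟨hmono, ?_, htop, hmono.isLUB_image_Ioi_and_notMem htop⟩
  rw [Hfun_eq_dualRatio_comp]
  exact (tendsto_dualRatio_nhdsGT_zero K (hK.trans_le hKC)).comp hscale

/-- Let `α, h, d, K > 0` with `d ≥ h/α²`.  Then `H` is strictly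
increasing on `(0,∞)`, `H(x) → -∞` as `x → 0⁺`, and `H(x) → 0` as `x → ∞`;
consequently `sup_{x > 0} H(x) = 0` and the supremum is not attained. -/
theorem stmt16 (α h d K : ℝ) (hα : 0 < α) (hh : 0 < h) (hd : 0 < d) (hK : 0 < K)
    (hdh : h / α ^ 2 ≤ d) :
    StrictMonoOn (Hfun α h d K) (Set.Ioi 0) ∧
    Tendsto (Hfun α h d K) (𝓝[>] 0) atBot ∧
    Tendsto (Hfun α h d K) atTop (𝓝 0) ∧
    IsLUB (Hfun α h d K '' Set.Ioi 0) 0 ∧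
    (0 : ℝ) ∉ Hfun α h d K '' Set.Ioi 0 :=
  stmt16_general α h d K hα hh hK hdh
end
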